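/- Let P be an sdf-absorbing strong C-hyperideal of a commutative multiplicative hyperring H with identity 1. Then the following are equivalent: (i) for all nonzero x, y ∈ H, x² − y² ⊆ P implies both x − y ∈ P and x + y ∈ P; (ii) 1 + 1 ∈ P. -/

import Mathlib

open Pointwise

/-- A commutative multiplicative hyperring structure on an abelian group `H`. -/
structure MulHyperring (H : Type*) [AddCommGroup H] where
  hmul : H → H → Set H
  hmul_nonempty : ∀ x y : H, (hmul x y).Nonempty
  hmul_comm : ∀ x y : H, hmul x y = hmul y x
  hmul_assoc : ∀ x y z : H, (⋃ a ∈ hmul y z, hmul x a) = ⋃ b ∈ hmul x y, hmul b z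
  hmul_distrib : ∀ x y z : H, hmul x (y + z) ⊆ hmul x y + hmul x z
  hmul_neg : ∀ x y : H, hmul x (-y) = -(hmul x y)

namespace Hyper

variable {H : Type*} [AddCommGroup H] (mul : H → H → Set H)

/-- `P` is a hyperideal. -/
def IsIdeal (P : Set H) : Prop :=
  (0 : H) ∈ P ∧ (∀ x ∈ P, ∀ y ∈ P, x - y ∈ P) ∧ ∀ r : H, ∀ x ∈ P, mul r x ⊆ P

/-- Hyperproduct `a ∘ b₁ ∘ ⋯ ∘ bₙ`. -/
def hprod : H → List H → Set H
  | a, [] => {a}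
  | a, b :: l => ⋃ t ∈ mul a b, hprod t l

/-- `C` is a finite hyperproduct `c₁ ∘ ⋯ ∘ cₙ`. -/
def IsProduct (C : Set H) : Prop := ∃ (a : H) (l : List H), C = hprod mul a l

/-- `D` is a finite (nonempty) sum of finite hyperproducts. -/
def IsSum (D : Set H) : Prop :=
  ∃ L : List (Set H), L ≠ [] ∧ (∀ C ∈ L, IsProduct mul C) ∧ D = L.sum

/-- `P` is a `𝒞`-hyperideal. -/
def IsCIdeal (P : Set H) : Prop :=
  IsIdeal mul P ∧ ∀ C : Set H, IsProduct mul C → (C ∩ P).Nonempty → C ⊆ P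

/-- `P` is a strong `𝒞`-hyperideal. -/
def IsStrongCIdeal (P : Set H) : Prop :=
  IsIdeal mul P ∧ ∀ D : Set H, IsSum mul D → (D ∩ P).Nonempty → D ⊆ P

/-- The hypersquare `x² = x ∘ x`. -/
def sq (x : H) : Set H := mul x x

/-- `P` is an sdf-absorbing hyperideal. -/
def IsSdf (P : Set H) : Prop :=
  IsIdeal mul P ∧ P ≠ Set.univ ∧
    ∀ x y : H, x ≠ 0 → y ≠ 0 → sq mul x - sq mul y ⊆ P → x - y ∈ P ∨ x + y ∈ P

/-- `P` is a weakly sdf-absorbing hyperideal. -/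
def IsWeaklySdf (P : Set H) : Prop :=
  IsIdeal mul P ∧ P ≠ Set.univ ∧
    ∀ x y : H, x ≠ 0 → y ≠ 0 → (0 : H) ∉ sq mul x - sq mul y →
      sq mul x - sq mul y ⊆ P → x - y ∈ P ∨ x + y ∈ P

/-- `P` is a prime hyperideal. -/
def IsPrime (P : Set H) : Prop :=
  IsIdeal mul P ∧ P ≠ Set.univ ∧ ∀ x y : H, mul x y ⊆ P → x ∈ P ∨ y ∈ P

/-- The radical: intersection of the prime hyperideals containing `P`. -/
def rad (P : Set H) : Set H := ⋂₀ {Q : Set H | IsPrime mul Q ∧ P ⊆ Q}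

/-- `hpow mul x n` is the hyperpower `x^(n+1)`. -/
def hpow (x : H) (n : ℕ) : Set H := hprod mul x (List.replicate n x)

/-- `x` is nilpotent: `0 ∈ xⁿ` for some `n`. -/
def IsNilpotent (x : H) : Prop := ∃ n : ℕ, (0 : H) ∈ hpow mul x n

/-- `x` is a regular element: `x ∈ x² ∘ y` for some `y`. -/
def IsRegularElem (x : H) : Prop := ∃ y : H, x ∈ ⋃ t ∈ sq mul x, mul t y

/-- The hyperideal generated by a set `S`. -/
def span (S : Set H) : Set H := ⋂₀ {Q : Set H | IsIdeal mul Q ∧ S ⊆ Q}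

/-- `P` is a maximal hyperideal. -/
def IsMaximal (P : Set H) : Prop :=
  IsIdeal mul P ∧ P ≠ Set.univ ∧
    ∀ B : Set H, IsIdeal mul B → P ⊆ B → B = P ∨ B = Set.univ

end Hyper

/-- Componentwise hypermultiplication on a product. -/
def prodMul {H₁ H₂ : Type*} (m₁ : H₁ → H₁ → Set H₁) (m₂ : H₂ → H₂ → Set H₂) :
    H₁ × H₂ → H₁ × H₂ → Set (H₁ × H₂) :=
  fun a b => (m₁ a.1 b.1) ×ˢ (m₂ a.2 b.2)

/-! `x² − x² = x∘x + x∘(−x)` is a sum of hyperproducts containing `0`, so a strong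
`𝒞`-hyperideal contains all of it; taking `x = y = 1` in (i) then gives `1 + 1 ∈ P`.
Conversely, `z∘(1 + 1) ⊆ z∘1 + z∘1` meets `P`, so the whole sum, which contains `z + z`,
lies in `P`; as `x + y = (x − y) + (y + y)`, either of `x ± y` in `P` gives the other. -/
namespace Hyper

variable {H : Type*} {mul : H → H → Set H}

theorem isProduct_mul (a b : H) : IsProduct mul (mul a b) :=
  ⟨a, [b], by simp [hprod]⟩

variable [AddCommGroup H] {P : Set H}

theorem IsIdeal.neg_mem (hP : IsIdeal mul P) {x : H} (hx : x ∈ P) : -x ∈ P := by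
  simpa using hP.2.1 0 hP.1 x hx

theorem IsIdeal.add_mem (hP : IsIdeal mul P) {x y : H} (hx : x ∈ P) (hy : y ∈ P) :
    x + y ∈ P := by
  simpa using hP.2.1 x hx (-y) (hP.neg_mem hy)

theorem IsIdeal.sub_mem_iff_add_mem (hP : IsIdeal mul P) {x y : H} (hy : y + y ∈ P) :
    x - y ∈ P ↔ x + y ∈ P := by
  constructor
  · intro h
    simpa [sub_add_add_cancel] using hP.add_mem h hy
  · intro h
    simpa [add_sub_add_right_eq_sub] using hP.2.1 _ h _ hy

theorem isSum_add {C₁ C₂ : Set H} (hC₁ : IsProduct mul C₁) (hC₂ : IsProduct mul C₂) :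
    IsSum mul (C₁ + C₂) :=
  ⟨[C₁, C₂], by simp, by simp [hC₁, hC₂], by simp⟩

theorem IsStrongCIdeal.add_subset (hP : IsStrongCIdeal mul P) {C₁ C₂ : Set H}
    (hC₁ : IsProduct mul C₁) (hC₂ : IsProduct mul C₂) (h : ((C₁ + C₂) ∩ P).Nonempty) :
    C₁ + C₂ ⊆ P :=
  hP.2 _ (isSum_add hC₁ hC₂) h

end Hyper

namespace MulHyperring

open Hyper

variable {H : Type*} [AddCommGroup H] (M : MulHyperring H) {P : Set H}

theorem sq_sub_sq_self_subset (hP : IsStrongCIdeal M.hmul P) (x : H) :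
    sq M.hmul x - sq M.hmul x ⊆ P := by
  have hsum : sq M.hmul x - sq M.hmul x = M.hmul x x + M.hmul x (-x) := by
    rw [Hyper.sq, M.hmul_neg, sub_eq_add_neg]
  obtain ⟨a, ha⟩ := M.hmul_nonempty x x
  have hzero : (0 : H) ∈ sq M.hmul x - sq M.hmul x := by
    simpa [Hyper.sq] using Set.sub_mem_sub ha ha
  rw [hsum] at hzero ⊢
  exact hP.add_subset (isProduct_mul _ _) (isProduct_mul _ _) ⟨0, hzero, hP.1.1⟩

theorem add_self_mem_of_add_self_mem_one {e : H} (he : ∀ x : H, x ∈ M.hmul x e)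
    (hP : IsStrongCIdeal M.hmul P) (hee : e + e ∈ P) (z : H) : z + z ∈ P := by
  obtain ⟨t, ht⟩ := M.hmul_nonempty z (e + e)
  have hsub : M.hmul z e + M.hmul z e ⊆ P :=
    hP.add_subset (isProduct_mul _ _) (isProduct_mul _ _)
      ⟨t, M.hmul_distrib z e e ht, hP.1.2.2 z (e + e) hee ht⟩
  exact hsub (Set.add_mem_add (he z) (he z))

end MulHyperring

/-- for an sdf-absorbing strong `𝒞`-hyperideal `P` of a hyperring with
identity `e`, both differences always absorb iff `e + e ∈ P`. -/
theorem stmt2 {H : Type*} [AddCommGroup H] (M : MulHyperring H) (e : H)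
    (he : ∀ x : H, x ∈ M.hmul x e) (P : Set H)
    (hS : Hyper.IsStrongCIdeal M.hmul P) (hsdf : Hyper.IsSdf M.hmul P) :
    (∀ x y : H, x ≠ 0 → y ≠ 0 → Hyper.sq M.hmul x - Hyper.sq M.hmul y ⊆ P →
        x - y ∈ P ∧ x + y ∈ P) ↔ e + e ∈ P := by
  constructor
  · intro h
    by_cases he0 : e = 0
    · simpa [he0] using hS.1.1
    · exact (h e e he0 he0 (M.sq_sub_sq_self_subset hS e)).2
  · intro hee x y hx hy hxy
    have hiff := hS.1.sub_mem_iff_add_mem (x := x)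
      (M.add_self_mem_of_add_self_mem_one he hS hee y)
    rcases hsdf.2.2 x y hx hy hxy with h | h
    · exact ⟨h, hiff.1 h⟩
    · exact ⟨hiff.2 h, h⟩
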